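/- Let d ≥ 1, k ∈ ℕ, p ≥ 1, κ ≥ d. If (f_n) is a sequence in B^{k,κ,p}(ℝ^d) that is Cauchy with respect to the norm ‖·‖_{B^{k,κ,p}}, then there exists f ∈ B^{k,κ,p}(ℝ^d) such that ‖f_n − f‖_{B^{k,κ,p}} → 0 as n → ∞. In other words, B^{k,κ,p} is a Banach space. -/

import Mathlib

open MeasureTheory
open scoped ENNReal NNReal

/-- `ℝ^d` as a Euclidean space. -/
abbrev E (d : ℕ) : Type := EuclideanSpace ℝ (Fin d)

/-- The `A^{κ,p}` norm: `sup_{R ≥ 0} (1+R)^{-κ/p} (∫ sup_{|z̄| ≤ R} ‖f(z+z̄)‖^p dz)^{1/p}`. -/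
noncomputable def Anorm {G F : Type*} [NormedAddCommGroup G] [MeasureSpace G]
    [NormedAddCommGroup F] (κ p : ℝ) (f : G → F) : ℝ≥0∞ :=
  ⨆ R : NNReal, (ENNReal.ofReal (1 + (R : ℝ))) ^ (-(κ / p)) *
    (∫⁻ z, ⨆ w ∈ Metric.closedBall (0 : G) (R : ℝ),
      ENNReal.ofReal (‖f (z + w)‖ ^ p)) ^ (1 / p)

/-- The `B^{k,κ,p}` norm: `(Σ_{i ≤ k} ‖D^i f‖_{A^{κ,p}}^p)^{1/p}`, where `D^i f` denotes
the `i`-th (Fréchet) derivative of `f`. -/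
noncomputable def Bnorm (d k : ℕ) (κ p : ℝ) (f : E d → ℂ) : ℝ≥0∞ :=
  (∑ i ∈ Finset.range (k + 1), Anorm κ p (iteratedFDeriv ℝ i f) ^ p) ^ (1 / p)

/-!
The `A^{κ,p}` norm is `⨆ R, (1 + R)^{-κ/p} ‖ballSup R f‖_{L^p}`, where
`ballSup R f z = sup_{|w| ≤ R} ‖f (z + w)‖`, so Minkowski's inequality makes it subadditive and
Fatou's lemma makes it lower semicontinuous under pointwise convergence. Taking `R = 1` and
integrating `‖f x‖ ≤ ballSup 1 f z` over `z ∈ B(x, 1)` gives `‖f x‖^p vol(B_1) ≤ 2^κ ‖f‖_A^p`, so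
along a `B^{k,κ,p}`-Cauchy sequence all derivatives of order `≤ k` are uniformly Cauchy, and the
sequence converges in `C^k` to some `g`. Lower semicontinuity then gives
`‖f_n - g‖_B ≤ liminf_m ‖f_n - f_m‖_B → 0`, and subadditivity gives `g ∈ B^{k,κ,p}`.
-/

open Filter Topology Set Metric

section UniformLimit

variable {G F : Type*} [NormedAddCommGroup G] [NormedSpace ℝ G]
  [NormedAddCommGroup F] [NormedSpace ℝ F] {k : ℕ∞} {f : ℕ → G → F}

theorem hasFTaylorSeriesUpTo_of_tendstoUniformly {g : G → F}
    {P : G → FormalMultilinearSeries ℝ G F} (hf : ∀ n, ContDiff ℝ k (f n))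
    (hP : ∀ i : ℕ, i ≤ k →
      TendstoUniformly (fun n => iteratedFDeriv ℝ i (f n)) (fun x => P x i) atTop)
    (hg : ∀ x, (P x 0).curry0 = g x) : HasFTaylorSeriesUpTo k g P where
  zero_eq := hg
  fderiv m hm x := by
    have hm' : (m : ℕ∞) < k := by exact_mod_cast hm
    refine hasFDerivAt_of_tendstoUniformly (l := atTop) (f := fun n => iteratedFDeriv ℝ m (f n))
      (f' := fun n y => (iteratedFDeriv ℝ (m + 1) (f n) y).curryLeft)
      (g := fun y => P y m) (g' := fun y => (P y (m + 1)).curryLeft) ?_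
      (fun n y => (hf n).ftaylorSeries.fderiv m hm y) (fun y => ?_) x
    · exact (continuousMultilinearCurryLeftEquiv ℝ (fun _ => G) F).isometry.uniformContinuous
        |>.comp_tendstoUniformly (hP (m + 1) (Order.add_one_le_of_lt hm'))
    · exact (hP m hm'.le).tendsto_at y
  cont m hm := (hP m (by exact_mod_cast hm)).continuous
    (.of_forall fun n => (hf n).continuous_iteratedFDeriv hm)

theorem exists_contDiff_tendstoUniformly_iteratedFDeriv [CompleteSpace F]
    (hf : ∀ n, ContDiff ℝ k (f n))
    (hcau : ∀ i : ℕ, i ≤ k →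
      UniformCauchySeqOn (fun n => iteratedFDeriv ℝ i (f n)) atTop univ) :
    ∃ g : G → F, ContDiff ℝ k g ∧ ∀ i : ℕ, i ≤ k →
      TendstoUniformly (fun n => iteratedFDeriv ℝ i (f n)) (iteratedFDeriv ℝ i g) atTop := by
  set P : G → FormalMultilinearSeries ℝ G F :=
    fun x i => limUnder atTop fun n => iteratedFDeriv ℝ i (f n) x
  have hP : ∀ i : ℕ, i ≤ k →
      TendstoUniformly (fun n => iteratedFDeriv ℝ i (f n)) (fun x => P x i) atTop := fun i hi =>
    tendstoUniformlyOn_univ.mp <| (hcau i hi).tendstoUniformlyOn_of_tendsto fun x _ =>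
      ((hcau i hi).cauchySeq (mem_univ x)).tendsto_limUnder
  have hT := hasFTaylorSeriesUpTo_of_tendstoUniformly hf hP fun x => rfl
  refine ⟨_, hT.contDiff, fun i hi => ?_⟩
  convert hP i hi using 1
  exact funext fun x => (hT.eq_iteratedFDeriv (by exact_mod_cast hi) x).symm

end UniformLimit

theorem eLpNorm'_liminf_le_liminf_eLpNorm' {α : Type*} [MeasurableSpace α] {μ : Measure α}
    {p : ℝ} (hp : 0 < p) {u : ℕ → α → ℝ≥0∞} (hu : ∀ n, AEMeasurable (u n) μ) :
    eLpNorm' (fun x => liminf (fun n => u n x) atTop) p μ ≤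
      liminf (fun n => eLpNorm' (u n) p μ) atTop := by
  have hp' : 0 < 1 / p := one_div_pos.mpr hp
  simp only [eLpNorm'_eq_lintegral_enorm, enorm_eq_self]
  calc (∫⁻ x, liminf (fun n => u n x) atTop ^ p ∂μ) ^ (1 / p)
      = (∫⁻ x, liminf (fun n => u n x ^ p) atTop ∂μ) ^ (1 / p) := by
        congr 2 with x
        exact (ENNReal.orderIsoRpow p hp).liminf_apply
    _ ≤ liminf (fun n => ∫⁻ x, u n x ^ p ∂μ) atTop ^ (1 / p) := by
        gcongr
        exact lintegral_liminf_le' fun n => (hu n).pow_const p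
    _ = liminf (fun n => (∫⁻ x, u n x ^ p ∂μ) ^ (1 / p)) atTop :=
        (ENNReal.orderIsoRpow (1 / p) hp').liminf_apply

theorem uniformCauchySeqOn_of_edist_le {ι α β : Type*} [PseudoEMetricSpace β] {F : ι → α → β}
    {l : Filter ι} {s : Set α} {b : ι × ι → ℝ≥0∞} (hb : Tendsto b (l ×ˢ l) (𝓝 0))
    (h : ∀ m n, ∀ x ∈ s, edist (F m x) (F n x) ≤ b (m, n)) : UniformCauchySeqOn F l s := by
  intro u hu
  obtain ⟨ε, hε, hεu⟩ := mem_uniformity_edist.1 hu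
  filter_upwards [hb (gt_mem_nhds hε)] with q hq x hx
  exact hεu ((h q.1 q.2 x hx).trans_lt hq)

theorem ENNReal.tendsto_liminf_of_tendsto_prod_zero {b : ℕ × ℕ → ℝ≥0∞}
    (hb : Tendsto b (atTop ×ˢ atTop) (𝓝 0)) :
    Tendsto (fun n => liminf (fun m => b (n, m)) atTop) atTop (𝓝 0) := by
  rw [prod_atTop_atTop_eq] at hb
  refine ENNReal.tendsto_nhds_zero.2 fun ε hε => ?_
  obtain ⟨N, hN⟩ := eventually_atTop_prod_self'.1 (ENNReal.tendsto_nhds_zero.1 hb ε hε)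
  filter_upwards [eventually_ge_atTop N] with n hn
  exact liminf_le_of_frequently_le'
    ((eventually_ge_atTop N).mono fun m hm => hN n hn m hm).frequently

section Anorm

variable {G F : Type*} [NormedAddCommGroup G] [NormedAddCommGroup F] {κ p R : ℝ}

noncomputable def ballSup (R : ℝ) (h : G → F) (z : G) : ℝ≥0∞ :=
  ⨆ w ∈ closedBall (0 : G) R, ‖h (z + w)‖ₑ

theorem enorm_le_ballSup {h : G → F} {z w : G} (hw : w ∈ closedBall (0 : G) R) :
    ‖h (z + w)‖ₑ ≤ ballSup R h z :=
  le_iSup₂ (f := fun w (_ : w ∈ closedBall (0 : G) R) => ‖h (z + w)‖ₑ) w hw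

theorem lowerSemicontinuous_ballSup {h : G → F} (hh : Continuous h) :
    LowerSemicontinuous (ballSup R h) :=
  lowerSemicontinuous_biSup fun w _ =>
    (hh.comp (continuous_add_const w)).enorm.lowerSemicontinuous

theorem ballSup_sub_le (u v : G → F) (z : G) :
    ballSup R (u - v) z ≤ ballSup R u z + ballSup R v z :=
  iSup₂_le fun _ hw => enorm_sub_le.trans
    (add_le_add (enorm_le_ballSup hw) (enorm_le_ballSup hw))

variable [MeasureSpace G]

theorem anorm_eq_iSup_eLpNorm' (hp : 0 < p) (h : G → F) :
    Anorm κ p h = ⨆ R : ℝ≥0,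
      ENNReal.ofReal (1 + R) ^ (-(κ / p)) * eLpNorm' (ballSup R h) p volume := by
  simp only [Anorm, eLpNorm'_eq_lintegral_enorm, enorm_eq_self, ballSup]
  congr! 4 with R
  refine lintegral_congr fun z => ?_
  have hpow := (ENNReal.orderIsoRpow p hp).map_iSup₂
    fun w (_ : w ∈ closedBall (0 : G) R) => ‖h (z + w)‖ₑ
  simp only [ENNReal.orderIsoRpow_apply] at hpow
  rw [hpow]
  simp only [← ofReal_norm, ENNReal.ofReal_rpow_of_nonneg (norm_nonneg _) hp.le]

theorem mul_eLpNorm'_ballSup_le_anorm (hp : 0 < p) (h : G → F) (R : ℝ≥0) :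
    ENNReal.ofReal (1 + R) ^ (-(κ / p)) * eLpNorm' (ballSup R h) p volume ≤ Anorm κ p h := by
  rw [anorm_eq_iSup_eLpNorm' hp]
  exact le_iSup (fun R : ℝ≥0 => ENNReal.ofReal (1 + R) ^ (-(κ / p)) *
    eLpNorm' (ballSup R h) p volume) R

variable [BorelSpace G]

theorem anorm_sub_le (hp : 1 ≤ p) {u v : G → F} (hu : Continuous u) (hv : Continuous v) :
    Anorm κ p (u - v) ≤ Anorm κ p u + Anorm κ p v := by
  have hp0 : 0 < p := by linarith
  refine (anorm_eq_iSup_eLpNorm' hp0 (u - v)).trans_le (iSup_le fun R => ?_)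
  set c := ENNReal.ofReal (1 + R) ^ (-(κ / p))
  calc c * eLpNorm' (ballSup R (u - v)) p volume
      ≤ c * eLpNorm' (ballSup R u + ballSup R v) p volume := by
        gcongr
        exact eLpNorm'_mono_enorm_ae hp0.le (.of_forall fun z => ballSup_sub_le u v z)
    _ ≤ c * (eLpNorm' (ballSup R u) p volume + eLpNorm' (ballSup R v) p volume) := by
        gcongr
        exact eLpNorm'_add_le (lowerSemicontinuous_ballSup hu).measurable.aestronglyMeasurable
          (lowerSemicontinuous_ballSup hv).measurable.aestronglyMeasurable hp
    _ ≤ _ := by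
        rw [mul_add]
        exact add_le_add (mul_eLpNorm'_ballSup_le_anorm hp0 u R)
          (mul_eLpNorm'_ballSup_le_anorm hp0 v R)

theorem anorm_le_liminf_of_tendsto (hp : 0 < p) {u : ℕ → G → F} {v : G → F}
    (hu : ∀ n, Continuous (u n)) (hv : ∀ x, Tendsto (fun n => u n x) atTop (𝓝 (v x))) :
    Anorm κ p v ≤ liminf (fun n => Anorm κ p (u n)) atTop := by
  refine (anorm_eq_iSup_eLpNorm' hp v).trans_le (iSup_le fun R => ?_)
  set c := ENNReal.ofReal (1 + R) ^ (-(κ / p))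
  have hc : c ≠ ⊤ := ENNReal.rpow_ne_top_of_ne_zero (by simp; positivity) ENNReal.ofReal_ne_top
  have hv_le : ∀ z, ballSup R v z ≤ liminf (fun n => ballSup R (u n) z) atTop := fun z =>
    iSup₂_le fun w hw => ((hv (z + w)).enorm.liminf_eq ▸
      liminf_le_liminf (.of_forall fun n => enorm_le_ballSup hw))
  calc c * eLpNorm' (ballSup R v) p volume
      ≤ c * liminf (fun n => eLpNorm' (ballSup R (u n)) p volume) atTop := by
        gcongr
        calc eLpNorm' (ballSup R v) p volume
            ≤ eLpNorm' (fun z => liminf (fun n => ballSup R (u n) z) atTop) p volume :=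
              eLpNorm'_mono_enorm_ae hp.le (.of_forall hv_le)
          _ ≤ _ := eLpNorm'_liminf_le_liminf_eLpNorm' hp fun n =>
              (lowerSemicontinuous_ballSup (hu n)).measurable.aemeasurable
    _ = liminf (fun n => c * eLpNorm' (ballSup R (u n)) p volume) atTop :=
        (ENNReal.liminf_const_mul_of_ne_top hc).symm
    _ ≤ _ := liminf_le_liminf (.of_forall fun n => mul_eLpNorm'_ballSup_le_anorm hp (u n) R)

theorem anorm_lt_top_of_sub (hp : 1 ≤ p) {u v : G → F} (hu : Continuous u) (hv : Continuous v)
    (hu_lt : Anorm κ p u < ⊤) (huv_lt : Anorm κ p (u - v) < ⊤) : Anorm κ p v < ⊤ := by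
  have := anorm_sub_le (κ := κ) hp hu (hu.sub hv)
  rw [sub_sub_cancel] at this
  exact this.trans_lt (ENNReal.add_lt_top.2 ⟨hu_lt, huv_lt⟩)

variable [(volume : Measure G).IsAddHaarMeasure]

theorem enorm_rpow_mul_volume_closedBall_le (hp : 0 < p) (h : G → F) (x : G) :
    ‖h x‖ₑ ^ p * volume (closedBall (0 : G) 1) ≤ 2 ^ κ * Anorm κ p h ^ p := by
  have hS : ‖h x‖ₑ ^ p * volume (closedBall (0 : G) 1) ≤
      eLpNorm' (ballSup 1 h) p volume ^ p := by
    rw [eLpNorm'_eq_lintegral_enorm, ← ENNReal.rpow_mul, one_div_mul_cancel hp.ne',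
      ENNReal.rpow_one, ← Measure.addHaar_closedBall_center volume x,
      ← lintegral_indicator_const measurableSet_closedBall]
    simp only [enorm_eq_self]
    refine lintegral_mono fun z =>
      indicator_le (g := fun z => ballSup 1 h z ^ p) (fun z hz => ?_) z
    have hw : x - z ∈ closedBall (0 : G) 1 := by
      rwa [mem_closedBall_zero_iff, ← dist_eq_norm, dist_comm]
    simpa only [enorm_eq_self, add_sub_cancel] using
      ENNReal.rpow_le_rpow (enorm_le_ballSup (h := h) (z := z) hw) hp.le
  have hA : eLpNorm' (ballSup 1 h) p volume ≤ 2 ^ (κ / p) * Anorm κ p h := by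
    have := mul_eLpNorm'_ballSup_le_anorm (κ := κ) hp h 1
    rw [NNReal.coe_one, ENNReal.rpow_neg,
      ENNReal.inv_mul_le_iff (by simp) (by simp)] at this
    simpa [one_add_one_eq_two] using this
  calc ‖h x‖ₑ ^ p * volume (closedBall (0 : G) 1)
      ≤ eLpNorm' (ballSup 1 h) p volume ^ p := hS
    _ ≤ (2 ^ (κ / p) * Anorm κ p h) ^ p := by gcongr
    _ = 2 ^ κ * Anorm κ p h ^ p := by
        rw [ENNReal.mul_rpow_of_nonneg _ _ hp.le, ← ENNReal.rpow_mul, div_mul_cancel₀ _ hp.ne']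

theorem exists_enorm_le_mul_anorm [ProperSpace G] (hp : 0 < p) :
    ∃ C : ℝ≥0∞, C ≠ ⊤ ∧ ∀ (h : G → F) (x : G), ‖h x‖ₑ ≤ C * Anorm κ p h := by
  set V := volume (closedBall (0 : G) 1)
  have hV : V ≠ 0 := (measure_closedBall_pos _ _ one_pos).ne'
  refine ⟨(2 ^ κ / V) ^ (1 / p), ENNReal.rpow_ne_top_of_nonneg (by positivity)
    (ENNReal.div_ne_top (by simp) hV), fun h x => ?_⟩
  have hle : ‖h x‖ₑ ^ p ≤ 2 ^ κ / V * Anorm κ p h ^ p := by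
    rw [div_eq_mul_inv, mul_right_comm, ← div_eq_mul_inv,
      ENNReal.le_div_iff_mul_le (.inl hV) (.inl measure_closedBall_lt_top.ne)]
    exact enorm_rpow_mul_volume_closedBall_le hp h x
  calc ‖h x‖ₑ = (‖h x‖ₑ ^ p) ^ (1 / p) := by
        rw [← ENNReal.rpow_mul, mul_one_div_cancel hp.ne', ENNReal.rpow_one]
    _ ≤ (2 ^ κ / V * Anorm κ p h ^ p) ^ (1 / p) := by gcongr
    _ = _ := by
        rw [ENNReal.mul_rpow_of_nonneg _ _ (by positivity), ← ENNReal.rpow_mul,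
          mul_one_div_cancel hp.ne', ENNReal.rpow_one]

end Anorm

section Bnorm

variable {d k : ℕ} {κ p : ℝ}

theorem anorm_iteratedFDeriv_le_bnorm (hp : 0 < p) (h : E d → ℂ) {i : ℕ} (hi : i ≤ k) :
    Anorm κ p (iteratedFDeriv ℝ i h) ≤ Bnorm d k κ p h := by
  calc Anorm κ p (iteratedFDeriv ℝ i h)
      = (Anorm κ p (iteratedFDeriv ℝ i h) ^ p) ^ (1 / p) := by
        rw [← ENNReal.rpow_mul, mul_one_div_cancel hp.ne', ENNReal.rpow_one]
    _ ≤ Bnorm d k κ p h := by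
        unfold Bnorm
        gcongr
        exact Finset.single_le_sum (f := fun j => Anorm κ p (iteratedFDeriv ℝ j h) ^ p)
          (fun j _ => zero_le) (Finset.mem_range.2 (Nat.lt_succ_of_le hi))

theorem tendsto_bnorm_zero {ι : Type*} {l : Filter ι} (hp : 0 < p) {h : ι → E d → ℂ}
    (hh : ∀ i ≤ k, Tendsto (fun n => Anorm κ p (iteratedFDeriv ℝ i (h n))) l (𝓝 0)) :
    Tendsto (fun n => Bnorm d k κ p (h n)) l (𝓝 0) := by
  have hsum : Tendsto
      (fun n => ∑ i ∈ Finset.range (k + 1), Anorm κ p (iteratedFDeriv ℝ i (h n)) ^ p)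
      l (𝓝 (∑ i ∈ Finset.range (k + 1), (0 : ℝ≥0∞) ^ p)) :=
    tendsto_finsetSum _ fun i hi => (ENNReal.continuous_rpow_const.tendsto 0).comp
      (hh i (Nat.lt_succ_iff.1 (Finset.mem_range.1 hi)))
  simpa only [Bnorm, ENNReal.zero_rpow_of_pos hp, Finset.sum_const_zero,
    ENNReal.zero_rpow_of_pos (one_div_pos.2 hp), Function.comp_def] using
    ((ENNReal.continuous_rpow_const (y := 1 / p)).tendsto _).comp hsum

variable {f : ℕ → E d → ℂ}

theorem uniformCauchySeqOn_iteratedFDeriv (hp : 0 < p) (hf : ∀ n, ContDiff ℝ k (f n))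
    (hcau : Tendsto (fun q : ℕ × ℕ => Bnorm d k κ p (f q.1 - f q.2)) (atTop ×ˢ atTop) (𝓝 0))
    {i : ℕ} (hi : i ≤ k) :
    UniformCauchySeqOn (fun n => iteratedFDeriv ℝ i (f n)) atTop univ := by
  obtain ⟨C, hC, hCA⟩ := exists_enorm_le_mul_anorm (G := E d)
    (F := ContinuousMultilinearMap ℝ (fun _ : Fin i => E d) ℂ) (κ := κ) hp
  refine uniformCauchySeqOn_of_edist_le (b := fun q => C * Bnorm d k κ p (f q.1 - f q.2))
    (by simpa using ENNReal.Tendsto.const_mul hcau (.inr hC)) fun m n x _ => ?_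
  rw [edist_eq_enorm_sub, ← Pi.sub_apply,
    ← iteratedFDeriv_sub ((hf m).of_le (mod_cast hi)) ((hf n).of_le (mod_cast hi))]
  exact (hCA _ x).trans (by gcongr; exact anorm_iteratedFDeriv_le_bnorm hp _ hi)

theorem tendsto_bnorm_sub_of_tendsto (hp : 0 < p) (hf : ∀ n, ContDiff ℝ k (f n))
    (hcau : Tendsto (fun q : ℕ × ℕ => Bnorm d k κ p (f q.1 - f q.2)) (atTop ×ˢ atTop) (𝓝 0))
    {g : E d → ℂ} (hg : ContDiff ℝ k g) (hfg : ∀ i ≤ k, ∀ x,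
      Tendsto (fun n => iteratedFDeriv ℝ i (f n) x) atTop (𝓝 (iteratedFDeriv ℝ i g x))) :
    Tendsto (fun n => Bnorm d k κ p (f n - g)) atTop (𝓝 0) := by
  refine tendsto_bnorm_zero hp fun i hi => ?_
  have hsub : ∀ {u v : E d → ℂ}, ContDiff ℝ k u → ContDiff ℝ k v →
      iteratedFDeriv ℝ i (u - v) = iteratedFDeriv ℝ i u - iteratedFDeriv ℝ i v :=
    fun hu hv => iteratedFDeriv_sub (hu.of_le (mod_cast hi)) (hv.of_le (mod_cast hi))
  refine tendsto_of_tendsto_of_tendsto_of_le_of_le tendsto_const_nhds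
    (ENNReal.tendsto_liminf_of_tendsto_prod_zero hcau) (fun _ => zero_le) fun n => ?_
  calc Anorm κ p (iteratedFDeriv ℝ i (f n - g))
      ≤ liminf (fun m => Anorm κ p (iteratedFDeriv ℝ i (f n - f m))) atTop := by
        refine anorm_le_liminf_of_tendsto hp (fun m => ?_) fun x => ?_
        · rw [hsub (hf n) (hf m)]
          exact ((hf n).continuous_iteratedFDeriv (mod_cast hi)).sub
            ((hf m).continuous_iteratedFDeriv (mod_cast hi))
        · simp only [hsub (hf n) (hf _), hsub (hf n) hg, Pi.sub_apply]
          exact tendsto_const_nhds.sub (hfg i hi x)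
    _ ≤ liminf (fun m => Bnorm d k κ p (f n - f m)) atTop :=
        liminf_le_liminf (.of_forall fun m => anorm_iteratedFDeriv_le_bnorm hp _ hi)

end Bnorm

theorem statement7_general (d k : ℕ) (p κ : ℝ) (hp : 1 ≤ p)
    (f : ℕ → E d → ℂ)
    (hsm : ∀ n, ContDiff ℝ k (f n))
    (hfin : ∀ n, ∀ i ≤ k, Anorm κ p (iteratedFDeriv ℝ i (f n)) < ⊤)
    (hcau : ∀ ε : ℝ, 0 < ε → ∃ N, ∀ m ≥ N, ∀ n ≥ N,
      Bnorm d k κ p (f m - f n) ≤ ENNReal.ofReal ε) :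
    ∃ g : E d → ℂ, ContDiff ℝ k g ∧
      (∀ i ≤ k, Anorm κ p (iteratedFDeriv ℝ i g) < ⊤) ∧
      Filter.Tendsto (fun n => Bnorm d k κ p (f n - g)) Filter.atTop (nhds 0) := by
  have hp0 : 0 < p := by linarith
  have hcau' : Tendsto (fun q : ℕ × ℕ => Bnorm d k κ p (f q.1 - f q.2)) (atTop ×ˢ atTop)
      (𝓝 0) := by
    rw [prod_atTop_atTop_eq]
    refine ENNReal.tendsto_nhds_zero.2 fun ε hε => ?_
    obtain ⟨r, -, hr, hrε⟩ := ENNReal.lt_iff_exists_real_btwn.1 hε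
    obtain ⟨N, hN⟩ := hcau r (ENNReal.ofReal_pos.1 hr)
    exact eventually_atTop_prod_self'.2 ⟨N, fun m hm n hn => (hN m hm n hn).trans hrε.le⟩
  obtain ⟨g, hg, hfg⟩ := exists_contDiff_tendstoUniformly_iteratedFDeriv (k := k) hsm
    fun i hi => uniformCauchySeqOn_iteratedFDeriv hp0 hsm hcau' (mod_cast hi)
  have hlim := tendsto_bnorm_sub_of_tendsto hp0 hsm hcau' hg
    fun i hi x => (hfg i (mod_cast hi)).tendsto_at x
  refine ⟨g, hg, fun i hi => ?_, hlim⟩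
  obtain ⟨n, hn⟩ := (hlim.eventually (gt_mem_nhds ENNReal.zero_lt_top)).exists
  refine anorm_lt_top_of_sub hp ((hsm n).continuous_iteratedFDeriv (mod_cast hi))
    (hg.continuous_iteratedFDeriv (mod_cast hi)) (hfin n i hi) ?_
  rw [← iteratedFDeriv_sub ((hsm n).of_le (mod_cast hi)) (hg.of_le (mod_cast hi))]
  exact (anorm_iteratedFDeriv_le_bnorm hp0 _ hi).trans_lt hn

/-- `B^{k,κ,p}` is complete: every Cauchy sequence has a limit in `B^{k,κ,p}`. -/
theorem statement7 (d k : ℕ) (hd : 1 ≤ d) (p κ : ℝ) (hp : 1 ≤ p) (hκ : (d : ℝ) ≤ κ)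
    (f : ℕ → E d → ℂ)
    (hsm : ∀ n, ContDiff ℝ k (f n))
    (hfin : ∀ n, ∀ i ≤ k, Anorm κ p (iteratedFDeriv ℝ i (f n)) < ⊤)
    (hcau : ∀ ε : ℝ, 0 < ε → ∃ N, ∀ m ≥ N, ∀ n ≥ N,
      Bnorm d k κ p (f m - f n) ≤ ENNReal.ofReal ε) :
    ∃ g : E d → ℂ, ContDiff ℝ k g ∧
      (∀ i ≤ k, Anorm κ p (iteratedFDeriv ℝ i g) < ⊤) ∧
      Filter.Tendsto (fun n => Bnorm d k κ p (f n - g)) Filter.atTop (nhds 0) :=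
  statement7_general d k p κ hp f hsm hfin hcau
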